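/- arXiv:0704.1537 — 2 statements merged into one kernel-verified Lean document; each statement's English description precedes it below -/
import Mathlib

section
/- For any $a > 0$ and any measurable function $h$ on $(0,\infty)$, if $N_a(h) < \infty$ then $L_a(h) < \infty$; more precisely $L_a(h) \le C_a (1 + N_a(h))$ for a constant $C_a$ depending only on $a$. -/
open MeasureTheory Set ENNReal

/-- The level set `E(k,m)` of `h` over the dyadic interval `(2^k, 2^{k+1}]`. -/
def levelSet (h : ℝ → ℂ) (k : ℤ) (m : ℕ) : Set ℝ :=
  if m = 1 then {r | r ∈ Ioc ((2:ℝ)^k) ((2:ℝ)^(k+1)) ∧ ‖h r‖ ≤ 2}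
  else {r | r ∈ Ioc ((2:ℝ)^k) ((2:ℝ)^(k+1)) ∧
        (2:ℝ)^(m-1) < ‖h r‖ ∧ ‖h r‖ ≤ (2:ℝ)^m}

/-- `d_m(h) = sup_k 2^{-k} |E(k,m)|`. -/
noncomputable def dm (h : ℝ → ℂ) (m : ℕ) : ℝ≥0∞ :=
  ⨆ k : ℤ, (2:ℝ≥0∞)^(-k) * volume (levelSet h k m)

/-- `N_a(h) = ∑_{m ≥ 1} m^a 2^m d_m(h)`. -/
noncomputable def Na (a : ℝ) (h : ℝ → ℂ) : ℝ≥0∞ :=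
  ∑' m : ℕ, ((m:ℝ≥0∞) + 1) ^ a * 2 ^ (m + 1) * dm h (m + 1)

/-- `L_a(h) = sup_j ∫_{2^j}^{2^{j+1}} |h(r)| (log(2+|h(r)|))^a dr/r`. -/
noncomputable def La (a : ℝ) (h : ℝ → ℂ) : ℝ≥0∞ :=
  ⨆ j : ℤ, ∫⁻ r in Ioc ((2:ℝ)^j) ((2:ℝ)^(j+1)),
    ENNReal.ofReal (‖h r‖ * (Real.log (2 + ‖h r‖)) ^ a / r)

/-!
On the level set `E(k, m)` we have `|h| ≤ 2^m`, hence `log (2 + |h|) ≤ 2m`, and `1/r < 2^{-k}`.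
So the integral of `|h| log(2 + |h|)^a / r` over `E(k, m)` is at most
`2^a m^a 2^m 2^{-k} |E(k, m)| ≤ 2^a m^a 2^m d_m(h)`. The level sets `E(k, m)`, `m ≥ 1`, cover
`(2^k, 2^{k+1}]`, and summing over `m` gives `L_a(h) ≤ 2^a N_a(h)`.
-/

lemma Ioc_subset_iUnion_levelSet (h : ℝ → ℂ) (k : ℤ) :
    Ioc ((2:ℝ)^k) ((2:ℝ)^(k+1)) ⊆ ⋃ m : ℕ, levelSet h k (m+1) := by
  intro r hr
  by_cases h2 : ‖h r‖ ≤ 2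
  · exact mem_iUnion.2 ⟨0, by simpa [levelSet, h2] using hr⟩
  have hex : ∃ n : ℕ, ‖h r‖ ≤ 2 ^ n :=
    (pow_unbounded_of_one_lt ‖h r‖ one_lt_two).imp fun _ hn => hn.le
  classical
  have hn2 : 2 ≤ Nat.find hex := by
    by_contra! hlt
    have := (Nat.find_spec hex).trans
      (pow_le_pow_right₀ one_le_two (by omega : Nat.find hex ≤ 1))
    linarith [pow_one (2:ℝ)]
  obtain ⟨m, hm⟩ : ∃ m, Nat.find hex = m + 2 := ⟨Nat.find hex - 2, by omega⟩
  have hlow : ¬ ‖h r‖ ≤ 2 ^ (m + 1) := Nat.find_min hex (by omega)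
  have hupp : ‖h r‖ ≤ 2 ^ (m + 2) := hm ▸ Nat.find_spec hex
  refine mem_iUnion.2 ⟨m + 1, ?_⟩
  simp only [levelSet, if_neg (by omega : m + 1 + 1 ≠ 1)]
  exact ⟨hr, by simpa using hlow, by exact_mod_cast hupp⟩

lemma norm_le_of_mem_levelSet {h : ℝ → ℂ} {k : ℤ} {m : ℕ} {r : ℝ}
    (hr : r ∈ levelSet h k (m+1)) :
    r ∈ Ioc ((2:ℝ)^k) ((2:ℝ)^(k+1)) ∧ ‖h r‖ ≤ 2 ^ (m+1) := by
  rcases Nat.eq_zero_or_pos m with rfl | hm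
  · simp only [levelSet] at hr
    exact ⟨hr.1, by simpa using hr.2⟩
  · simp only [levelSet, if_neg (by omega : m + 1 ≠ 1)] at hr
    exact ⟨hr.1, hr.2.2⟩

lemma Real.log_two_add_le {t : ℝ} {m : ℕ} (ht0 : 0 ≤ t) (ht : t ≤ 2 ^ (m+1)) :
    Real.log (2 + t) ≤ 2 * ((m:ℝ) + 1) := by
  have hpow : (2:ℝ) + t ≤ 2 ^ (m+2) := by
    have : (2:ℝ) ≤ 2 ^ (m+1) := le_self_pow₀ one_le_two (by omega)
    rw [pow_succ]
    linarith
  calc Real.log (2 + t) ≤ Real.log (2 ^ (m+2)) := Real.log_le_log (by linarith) hpow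
    _ = ((m:ℝ) + 2) * Real.log 2 := by rw [Real.log_pow]; push_cast; ring
    _ ≤ ((m:ℝ) + 2) * 1 := by gcongr; linarith [Real.log_two_lt_d9]
    _ ≤ 2 * ((m:ℝ) + 1) := by linarith [m.cast_nonneg (α := ℝ)]

lemma mul_log_two_add_rpow_div_le {a t r : ℝ} {m : ℕ} {k : ℤ} (ha : 0 ≤ a) (ht0 : 0 ≤ t)
    (ht : t ≤ 2 ^ (m+1)) (hr : 2 ^ k < r) :
    t * Real.log (2 + t) ^ a / r ≤ 2 ^ (m+1) * (2 * ((m:ℝ) + 1)) ^ a / 2 ^ k := by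
  have hlog := Real.log_two_add_le ht0 ht
  have hlog0 : 0 ≤ Real.log (2 + t) := Real.log_nonneg (by linarith)
  gcongr

lemma ENNReal.ofReal_two_zpow (k : ℤ) : ENNReal.ofReal ((2:ℝ) ^ k) = 2 ^ k := by
  rw [← NNReal.coe_two, ← NNReal.coe_zpow, ENNReal.ofReal_coe_nnreal,
    ENNReal.coe_zpow two_ne_zero]
  rfl

lemma ofReal_levelSet_bound_eq {a : ℝ} (ha : 0 ≤ a) (m : ℕ) (k : ℤ) :
    ENNReal.ofReal (2 ^ (m+1) * (2 * ((m:ℝ) + 1)) ^ a / 2 ^ k)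
      = 2 ^ a * (((m:ℝ≥0∞) + 1) ^ a * 2 ^ (m+1) * 2 ^ (-k)) := by
  have hcast : ENNReal.ofReal (2 * ((m:ℝ) + 1)) = 2 * ((m:ℝ≥0∞) + 1) := by
    rw [ENNReal.ofReal_mul zero_le_two, ENNReal.ofReal_add (by positivity) zero_le_one]
    simp
  rw [ENNReal.ofReal_div_of_pos (by positivity), ENNReal.ofReal_mul (by positivity),
    ← ENNReal.ofReal_rpow_of_pos (by positivity), hcast, ENNReal.mul_rpow_of_nonneg _ _ ha,
    ENNReal.ofReal_pow zero_le_two, ENNReal.ofReal_two_zpow, ENNReal.ofReal_ofNat,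
    div_eq_mul_inv, ← ENNReal.zpow_neg]
  ring

lemma setLIntegral_levelSet_le {a : ℝ} (ha : 0 ≤ a) (h : ℝ → ℂ) (k : ℤ) (m : ℕ) :
    ∫⁻ r in levelSet h k (m+1), ENNReal.ofReal (‖h r‖ * Real.log (2 + ‖h r‖) ^ a / r)
      ≤ 2 ^ a * (((m:ℝ≥0∞) + 1) ^ a * 2 ^ (m+1) * dm h (m+1)) := by
  have hpt : ∀ r ∈ levelSet h k (m+1),
      ENNReal.ofReal (‖h r‖ * Real.log (2 + ‖h r‖) ^ a / r)
        ≤ 2 ^ a * (((m:ℝ≥0∞) + 1) ^ a * 2 ^ (m+1) * 2 ^ (-k)) := by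
    intro r hr
    obtain ⟨hrk, hnorm⟩ := norm_le_of_mem_levelSet hr
    rw [← ofReal_levelSet_bound_eq ha]
    exact ENNReal.ofReal_le_ofReal
      (mul_log_two_add_rpow_div_le ha (norm_nonneg _) hnorm hrk.1)
  calc _ ≤ ∫⁻ _ in levelSet h k (m+1),
          2 ^ a * (((m:ℝ≥0∞) + 1) ^ a * 2 ^ (m+1) * 2 ^ (-k)) :=
        setLIntegral_mono measurable_const hpt
    _ = 2 ^ a * (((m:ℝ≥0∞) + 1) ^ a * 2 ^ (m+1) *
          (2 ^ (-k) * volume (levelSet h k (m+1)))) := by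
        rw [setLIntegral_const]; ring
    _ ≤ 2 ^ a * (((m:ℝ≥0∞) + 1) ^ a * 2 ^ (m+1) * dm h (m+1)) := by
        gcongr
        exact le_iSup (fun k : ℤ => (2:ℝ≥0∞) ^ (-k) * volume (levelSet h k (m+1))) k

lemma La_le_two_rpow_mul_Na {a : ℝ} (ha : 0 ≤ a) (h : ℝ → ℂ) :
    La a h ≤ 2 ^ a * Na a h := by
  refine iSup_le fun k => ?_
  calc _ ≤ ∫⁻ r in ⋃ m : ℕ, levelSet h k (m+1),
          ENNReal.ofReal (‖h r‖ * Real.log (2 + ‖h r‖) ^ a / r) :=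
        lintegral_mono_set (Ioc_subset_iUnion_levelSet h k)
    _ ≤ ∑' m : ℕ, ∫⁻ r in levelSet h k (m+1),
          ENNReal.ofReal (‖h r‖ * Real.log (2 + ‖h r‖) ^ a / r) :=
        lintegral_iUnion_le _ _
    _ ≤ ∑' m : ℕ, 2 ^ a * (((m:ℝ≥0∞) + 1) ^ a * 2 ^ (m+1) * dm h (m+1)) :=
        ENNReal.tsum_le_tsum fun m => setLIntegral_levelSet_le ha h k m
    _ = 2 ^ a * Na a h := ENNReal.tsum_mul_left

/-- If `N_a(h) < ∞` then `L_a(h) < ∞`; more precisely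
`L_a(h) ≤ C_a (1 + N_a(h))` with `C_a` depending only on `a`. -/
theorem stmt1 (a : ℝ) (ha : 0 < a) :
    ∃ C : ℝ≥0∞, 0 < C ∧ C < ∞ ∧ ∀ h : ℝ → ℂ, Measurable h →
      (La a h ≤ C * (1 + Na a h) ∧ (Na a h < ∞ → La a h < ∞)) := by
  have hC : (2:ℝ≥0∞) ^ a < ∞ := ENNReal.rpow_lt_top_of_nonneg ha.le ofNat_ne_top
  refine ⟨2 ^ a, ENNReal.rpow_pos two_pos ofNat_ne_top, hC, fun h _ => ?_⟩
  have hLa : La a h ≤ 2 ^ a * (1 + Na a h) :=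
    (La_le_two_rpow_mul_Na ha.le h).trans (by gcongr; exact le_add_self)
  exact ⟨hLa, fun hNa =>
    hLa.trans_lt (ENNReal.mul_lt_top hC (ENNReal.add_lt_top.2 ⟨one_lt_top, hNa⟩))⟩
end

section
/- For any $a > 0$ and $b > 1$, if $L_{a+b}(h) < \infty$ for a measurable function $h$ on $(0,\infty)$, then $N_a(h) < \infty$; in fact $N_a(h) \le 2 d_1(h) + C L_{a+b}(h) \sum_{m \ge 2} m^{-b}$ for an absolute constant $C$. -/
open MeasureTheory Set ENNReal

/-!
On `E(k, m + 2)` we have `|h| > 2^(m+1)`, hence `log (2 + |h|) ≥ (m + 1) log 2`, while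
`1/r ≥ 2^(-k-1)`. Integrating the density of `L_{a+b}` over `E(k, m + 2)` is a Chebyshev bound
`2^m ((m + 1) log 2)^(a+b) 2^(-k) |E(k, m + 2)| ≤ L_{a+b}(h)`, so the `m`-th term of `N_a(h)` is
`O(m^(-b) L_{a+b}(h))`; the first term is `2 d_1(h) ≤ 2`.
-/

lemma ENNReal.ofReal_zpow_of_pos {x : ℝ} (hx : 0 < x) (n : ℤ) :
    ENNReal.ofReal (x ^ n) = ENNReal.ofReal x ^ n := by
  rw [ENNReal.ofReal, ENNReal.ofReal, Real.toNNReal_zpow hx.le n,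
    ENNReal.coe_zpow (Real.toNNReal_pos.mpr hx).ne']

lemma ENNReal.natCast_add_two_rpow (m : ℕ) (s : ℝ) :
    ((m : ℝ≥0∞) + 2) ^ s = ENNReal.ofReal (((m : ℝ) + 2) ^ s) := by
  rw [← ENNReal.ofReal_rpow_of_pos (by positivity),
    ENNReal.ofReal_add (by positivity) zero_le_two, ENNReal.ofReal_natCast, ENNReal.ofReal_ofNat]

lemma tsum_natCast_add_two_rpow_neg_lt_top {b : ℝ} (hb : 1 < b) :
    ∑' m : ℕ, ((m : ℝ≥0∞) + 2) ^ (-b) < ∞ := by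
  have hsum : Summable fun m : ℕ => ((m : ℝ) + 2) ^ (-b) := by
    simpa using (summable_nat_add_iff 2).mpr (Real.summable_nat_rpow.mpr (neg_lt_neg hb))
  simp_rw [ENNReal.natCast_add_two_rpow]
  rw [← ENNReal.ofReal_tsum_of_nonneg (fun m => by positivity) hsum]
  exact ENNReal.ofReal_lt_top

lemma levelSet_subset_Ioc (h : ℝ → ℂ) (k : ℤ) (m : ℕ) :
    levelSet h k m ⊆ Ioc ((2:ℝ) ^ k) ((2:ℝ) ^ (k + 1)) := by
  unfold levelSet
  split_ifs
  exacts [fun r hr => hr.1, fun r hr => hr.1]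

lemma measurableSet_levelSet {h : ℝ → ℂ} (hh : Measurable h) (k : ℤ) (m : ℕ) :
    MeasurableSet (levelSet h k m) := by
  unfold levelSet
  split_ifs
  · exact measurableSet_Ioc.inter (measurableSet_le hh.norm measurable_const)
  · exact measurableSet_Ioc.inter
      ((measurableSet_lt measurable_const hh.norm).inter
        (measurableSet_le hh.norm measurable_const))

lemma dm_le_one (h : ℝ → ℂ) (m : ℕ) : dm h m ≤ 1 := by
  refine iSup_le fun k => ?_
  have hvol : volume (Ioc ((2:ℝ) ^ k) ((2:ℝ) ^ (k + 1))) = (2:ℝ≥0∞) ^ k := by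
    rw [Real.volume_Ioc, zpow_add_one₀ two_ne_zero, mul_two, add_sub_cancel_right,
      ENNReal.ofReal_zpow_of_pos two_pos, ENNReal.ofReal_ofNat]
  calc (2:ℝ≥0∞) ^ (-k) * volume (levelSet h k m)
      ≤ (2:ℝ≥0∞) ^ (-k) * (2:ℝ≥0∞) ^ k := by
        gcongr
        exact hvol ▸ measure_mono (levelSet_subset_Ioc h k m)
    _ = 1 := by
        rw [← ENNReal.zpow_add two_ne_zero ENNReal.ofNat_ne_top, neg_add_cancel, zpow_zero]

lemma two_pow_mul_log_rpow_le {p x : ℝ} (hp : 0 ≤ p) {n : ℕ} (hx : (2:ℝ) ^ n ≤ x) :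
    (2:ℝ) ^ n * (n * Real.log 2) ^ p ≤ x * Real.log (2 + x) ^ p := by
  have hlog : n * Real.log 2 ≤ Real.log (2 + x) := by
    rw [← Real.log_pow]
    exact Real.log_le_log (by positivity) (by linarith)
  gcongr
  exact (pow_nonneg zero_le_two n).trans hx

lemma ofReal_mul_volume_le_La {h : ℝ → ℂ} {p c : ℝ} {k : ℤ} {E : Set ℝ}
    (hE : MeasurableSet E) (hEk : E ⊆ Ioc ((2:ℝ) ^ k) ((2:ℝ) ^ (k + 1)))
    (hc : ∀ r ∈ E, c ≤ ‖h r‖ * Real.log (2 + ‖h r‖) ^ p / r) :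
    ENNReal.ofReal c * volume E ≤ La p h :=
  calc ENNReal.ofReal c * volume E = ∫⁻ _ in E, ENNReal.ofReal c :=
        (setLIntegral_const _ _).symm
    _ ≤ ∫⁻ r in E, ENNReal.ofReal (‖h r‖ * Real.log (2 + ‖h r‖) ^ p / r) :=
        setLIntegral_mono' hE fun r hr => ENNReal.ofReal_le_ofReal (hc r hr)
    _ ≤ ∫⁻ r in Ioc ((2:ℝ) ^ k) ((2:ℝ) ^ (k + 1)),
          ENNReal.ofReal (‖h r‖ * Real.log (2 + ‖h r‖) ^ p / r) := lintegral_mono_set hEk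
    _ ≤ La p h := le_iSup (fun j : ℤ => ∫⁻ r in Ioc ((2:ℝ) ^ j) ((2:ℝ) ^ (j + 1)),
          ENNReal.ofReal (‖h r‖ * Real.log (2 + ‖h r‖) ^ p / r)) k

lemma ofReal_mul_dm_le_La {h : ℝ → ℂ} (hh : Measurable h) {p : ℝ} (hp : 0 ≤ p) (m : ℕ) :
    ENNReal.ofReal (2 ^ m * (((m:ℝ) + 1) * Real.log 2) ^ p) * dm h (m + 2) ≤ La p h := by
  rw [dm, ENNReal.mul_iSup]
  refine iSup_le fun k => ?_
  rw [← mul_assoc, ← ENNReal.ofReal_ofNat 2, ← ENNReal.ofReal_zpow_of_pos two_pos,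
    ← ENNReal.ofReal_mul (by positivity)]
  refine ofReal_mul_volume_le_La (measurableSet_levelSet hh k _) (levelSet_subset_Ioc h k _) ?_
  intro r hr
  rw [levelSet, if_neg (by omega)] at hr
  obtain ⟨⟨hr₁, hr₂⟩, hlow, -⟩ := hr
  rw [show m + 2 - 1 = m + 1 by omega] at hlow
  have hr₀ : 0 < r := (zpow_pos two_pos k).trans hr₁
  have hnorm := two_pow_mul_log_rpow_le hp (n := m + 1) hlow.le
  push_cast at hnorm
  calc _ = 2 ^ (m + 1) * (((m:ℝ) + 1) * Real.log 2) ^ p / 2 ^ (k + 1) := by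
        rw [zpow_add_one₀ two_ne_zero, zpow_neg, pow_succ]
        field_simp
    _ ≤ ‖h r‖ * Real.log (2 + ‖h r‖) ^ p / 2 ^ (k + 1) := by gcongr
    _ ≤ ‖h r‖ * Real.log (2 + ‖h r‖) ^ p / r := by
        gcongr
        exact le_trans (by positivity) hnorm

lemma add_two_rpow_mul_two_pow_le {a b : ℝ} (hab : 0 ≤ a + b) (m : ℕ) :
    ((m:ℝ) + 2) ^ a * 2 ^ (m + 2) ≤
      4 * (2 / Real.log 2) ^ (a + b) * ((m:ℝ) + 2) ^ (-b) *
        (2 ^ m * (((m:ℝ) + 1) * Real.log 2) ^ (a + b)) := by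
  have hm : (0:ℝ) < m + 2 := by positivity
  have hbase : ((m:ℝ) + 2) ^ (a + b) ≤
      (2 / Real.log 2 * (((m:ℝ) + 1) * Real.log 2)) ^ (a + b) := by
    refine Real.rpow_le_rpow hm.le ?_ hab
    have hlog : Real.log 2 ≠ 0 := (Real.log_pos one_lt_two).ne'
    field_simp
    linarith
  calc ((m:ℝ) + 2) ^ a * 2 ^ (m + 2)
        = 4 * 2 ^ m * (((m:ℝ) + 2) ^ (-b) * ((m:ℝ) + 2) ^ (a + b)) := by
        rw [← Real.rpow_add hm, show -b + (a + b) = a by ring, pow_add]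
        ring
    _ ≤ 4 * 2 ^ m * (((m:ℝ) + 2) ^ (-b) *
          (2 / Real.log 2 * (((m:ℝ) + 1) * Real.log 2)) ^ (a + b)) := by gcongr
    _ = _ := by
        rw [Real.mul_rpow (by positivity) (by positivity)]
        ring

lemma Na_term_le {h : ℝ → ℂ} (hh : Measurable h) {a b : ℝ} (hab : 0 ≤ a + b) (m : ℕ) :
    ((m:ℝ≥0∞) + 2) ^ a * 2 ^ (m + 2) * dm h (m + 2) ≤
      ENNReal.ofReal (4 * (2 / Real.log 2) ^ (a + b)) * La (a + b) h *
        ((m:ℝ≥0∞) + 2) ^ (-b) := by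
  rw [ENNReal.natCast_add_two_rpow, ENNReal.natCast_add_two_rpow, ← ENNReal.ofReal_ofNat 2,
    ← ENNReal.ofReal_pow zero_le_two, ← ENNReal.ofReal_mul (by positivity)]
  calc ENNReal.ofReal (((m:ℝ) + 2) ^ a * 2 ^ (m + 2)) * dm h (m + 2)
      ≤ ENNReal.ofReal (4 * (2 / Real.log 2) ^ (a + b) * ((m:ℝ) + 2) ^ (-b) *
          (2 ^ m * (((m:ℝ) + 1) * Real.log 2) ^ (a + b))) * dm h (m + 2) := by
        gcongr ENNReal.ofReal ?_ * _
        exact add_two_rpow_mul_two_pow_le hab m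
    _ = ENNReal.ofReal (4 * (2 / Real.log 2) ^ (a + b)) * ENNReal.ofReal (((m:ℝ) + 2) ^ (-b)) *
          (ENNReal.ofReal (2 ^ m * (((m:ℝ) + 1) * Real.log 2) ^ (a + b)) * dm h (m + 2)) := by
        rw [ENNReal.ofReal_mul (by positivity), ENNReal.ofReal_mul (by positivity), mul_assoc]
    _ ≤ ENNReal.ofReal (4 * (2 / Real.log 2) ^ (a + b)) * ENNReal.ofReal (((m:ℝ) + 2) ^ (-b)) *
          La (a + b) h := by
        gcongr
        exact ofReal_mul_dm_le_La hh hab m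
    _ = _ := mul_right_comm _ _ _

lemma Na_le {h : ℝ → ℂ} (hh : Measurable h) {a b : ℝ} (hab : 0 ≤ a + b) :
    Na a h ≤ 2 * dm h 1 + ENNReal.ofReal (4 * (2 / Real.log 2) ^ (a + b)) * La (a + b) h *
      ∑' m : ℕ, ((m:ℝ≥0∞) + 2) ^ (-b) := by
  rw [Na, tsum_eq_zero_add' ENNReal.summable, ← ENNReal.tsum_mul_left]
  refine add_le_add (by simp) (ENNReal.tsum_le_tsum fun m => ?_)
  rw [show ((m + 1 : ℕ) : ℝ≥0∞) + 1 = (m : ℝ≥0∞) + 2 by push_cast; ring]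
  exact Na_term_le hh hab m

/-- If `L_{a+b}(h) < ∞` for some `b > 1`, then `N_a(h) < ∞`; in fact
`N_a(h) ≤ 2 d_1(h) + C L_{a+b}(h) ∑_{m ≥ 2} m^{-b}`. -/
theorem stmt2 (a b : ℝ) (ha : 0 < a) (hb : 1 < b) :
    ∃ C : ℝ≥0∞, 0 < C ∧ C < ∞ ∧ ∀ h : ℝ → ℂ, Measurable h →
      (Na a h ≤ 2 * dm h 1 +
          C * La (a + b) h * ∑' m : ℕ, ((m:ℝ≥0∞) + 2) ^ (-b) ∧
        (La (a + b) h < ∞ → Na a h < ∞)) := by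
  have hab : 0 ≤ a + b := by linarith
  refine ⟨_, ENNReal.ofReal_pos.2 (by positivity), ENNReal.ofReal_lt_top, fun h hh =>
    ⟨Na_le hh hab, fun hL => (Na_le hh hab).trans_lt ?_⟩⟩
  exact ENNReal.add_lt_top.2
    ⟨ENNReal.mul_lt_top ENNReal.ofNat_lt_top ((dm_le_one h 1).trans_lt ENNReal.one_lt_top),
      ENNReal.mul_lt_top (ENNReal.mul_lt_top ENNReal.ofReal_lt_top hL)
        (tsum_natCast_add_two_rpow_neg_lt_top hb)⟩
end
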